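/- arXiv:1102.0204 — 10 statements merged into one kernel-verified Lean document; each statement's English description precedes it below -/
import Mathlib

section
/- MBCR correctness (Theorem 1 applied to the Minimum Bandwidth point): Let k, d, t, g be positive integers with k ≤ d, let M be a positive real number, and set α = M(2d+t−1)/(k(2d−k+t)), β = 2M/(k(2d−k+t)), β′ = M/(k(2d−k+t)). Then for every sequence u_0, …, u_{g−1} of integers with 1 ≤ u_i ≤ t for all i and ∑_{i<g} u_i = k, writing S_i = ∑_{j<i} u_j, one has ∑_{i<g} u_i · min(α, (d − S_i)·β + (t − u_i)·β′) ≥ M. -/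
/-- MBCR correctness: Theorem 1 applied to the Minimum Bandwidth point. -/
theorem mbcr_correctness (k d t g : ℕ) (hk : 0 < k) (hd : 0 < d) (ht : 0 < t)
    (hg : 0 < g) (hkd : k ≤ d) (M : ℝ) (hM : 0 < M)
    (α β β' : ℝ)
    (hα : α = M * (2 * (d : ℝ) + t - 1) / (k * (2 * (d : ℝ) - k + t)))
    (hβ : β = 2 * M / (k * (2 * (d : ℝ) - k + t)))
    (hβ' : β' = M / (k * (2 * (d : ℝ) - k + t)))
    (u : ℕ → ℕ) (hu : ∀ i < g, 1 ≤ u i ∧ u i ≤ t)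
    (hsum : ∑ i ∈ Finset.range g, u i = k) :
    ∑ i ∈ Finset.range g, (u i : ℝ) *
        min α (((d : ℝ) - ((∑ j ∈ Finset.range i, u j : ℕ) : ℝ)) * β
          + ((t : ℝ) - (u i : ℝ)) * β') ≥ M := by
  set S : ℕ → ℕ := fun n => ∑ j ∈ Finset.range n, u j with hSdef
  set D : ℝ := (k : ℝ) * (2 * (d : ℝ) - k + t) with hDdef
  have hkR : (1 : ℝ) ≤ (k : ℝ) := by exact_mod_cast hk
  have hkdR : (k : ℝ) ≤ (d : ℝ) := by exact_mod_cast hkd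
  have htR : (1 : ℝ) ≤ (t : ℝ) := by exact_mod_cast ht
  have hDpos : 0 < D := by
    apply mul_pos (by linarith)
    linarith
  set f : ℕ → ℝ := fun j => 2 * ((d : ℝ) - j) + (t : ℝ) - 1 with hfdef
  -- block sum formula
  have hblock : ∀ a n : ℕ, ∑ j ∈ Finset.Ico a (a + n), f j
      = (n : ℝ) * (2 * ((d : ℝ) - a) + t - n) := by
    intro a n
    induction n with
    | zero => simp
    | succ m ih =>
      rw [show a + (m + 1) = (a + m) + 1 from rfl,
        Finset.sum_Ico_succ_top (Nat.le_add_right a m), ih]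
      simp only [hfdef]
      push_cast
      ring
  have hSmono : ∀ m : ℕ, S m ≤ S (m + 1) := by
    intro m
    exact Finset.sum_le_sum_of_subset (Finset.range_subset_range.mpr (Nat.le_succ m))
  -- partition of Ico 0 (S N) into blocks
  have hpart : ∀ N : ℕ, ∑ i ∈ Finset.range N, ∑ j ∈ Finset.Ico (S i) (S (i + 1)), f j
      = ∑ j ∈ Finset.Ico 0 (S N), f j := by
    intro N
    induction N with
    | zero => simp [hSdef]
    | succ m ih =>
      rw [Finset.sum_range_succ, ih,
        Finset.sum_Ico_consecutive _ (Nat.zero_le _) (hSmono m)]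
  have hSsucc : ∀ i : ℕ, S (i + 1) = S i + u i := by
    intro i; simp [hSdef, Finset.sum_range_succ]
  -- per-term bound
  have hterm : ∀ i ∈ Finset.range g,
      (M / D) * ∑ j ∈ Finset.Ico (S i) (S (i + 1)), f j ≤
      (u i : ℝ) * min α (((d : ℝ) - ((∑ j ∈ Finset.range i, u j : ℕ) : ℝ)) * β
          + ((t : ℝ) - (u i : ℝ)) * β') := by
    intro i hi
    rw [Finset.mem_range] at hi
    obtain ⟨hu1, hu2⟩ := hu i hi
    have hu1R : (1 : ℝ) ≤ (u i : ℝ) := by exact_mod_cast hu1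
    have hS0 : (0 : ℝ) ≤ (S i : ℝ) := by positivity
    have hSi : ((∑ j ∈ Finset.range i, u j : ℕ) : ℝ) = (S i : ℝ) := rfl
    rw [hSi, hSsucc i, hblock (S i) (u i)]
    have hmin : M / D * (2 * ((d : ℝ) - S i) + t - u i) ≤
        min α (((d : ℝ) - (S i : ℝ)) * β + ((t : ℝ) - (u i : ℝ)) * β') := by
      apply le_min
      · rw [hα]
        have h1 : M / D * (2 * ((d : ℝ) - S i) + t - u i)
            = M * (2 * ((d : ℝ) - S i) + t - u i) / D := by ring
        rw [h1, div_le_div_iff₀ hDpos hDpos]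
        have key : 0 ≤ M * D * (2 * (S i : ℝ) + u i - 1) :=
          mul_nonneg (mul_pos hM hDpos).le (by linarith)
        nlinarith [key]
      · rw [hβ, hβ']
        have h2 : ((d : ℝ) - (S i : ℝ)) * (2 * M / D) + ((t : ℝ) - (u i : ℝ)) * (M / D)
            = M / D * (2 * ((d : ℝ) - S i) + t - u i) := by ring
        rw [h2]
    calc M / D * ((u i : ℝ) * (2 * ((d : ℝ) - S i) + t - u i))
        = (u i : ℝ) * (M / D * (2 * ((d : ℝ) - S i) + t - u i)) := by ring
      _ ≤ (u i : ℝ) * min α (((d : ℝ) - (S i : ℝ)) * β + ((t : ℝ) - (u i : ℝ)) * β') :=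
          mul_le_mul_of_nonneg_left hmin (by linarith)
  have hsumS : S g = k := hsum
  have htotal : ∑ i ∈ Finset.range g, (M / D) * ∑ j ∈ Finset.Ico (S i) (S (i + 1)), f j = M := by
    rw [← Finset.mul_sum, hpart g, hsumS,
      show Finset.Ico 0 k = Finset.Ico 0 (0 + k) by rw [Nat.zero_add], hblock 0 k]
    have hDeq : (k : ℝ) * (2 * ((d : ℝ) - (0 : ℕ)) + t - k) = D := by
      push_cast; rw [hDdef]; ring
    rw [hDeq, div_mul_cancel₀ M hDpos.ne']
  calc M = ∑ i ∈ Finset.range g, (M / D) * ∑ j ∈ Finset.Ico (S i) (S (i + 1)), f j :=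
        htotal.symm
    _ ≤ _ := Finset.sum_le_sum hterm
end

section
/- MSCR correctness (Theorem 1 applied to the Minimum Storage point): Let k, d, t, g be positive integers with k ≤ d, let M be a positive real number, and set α = M/k and β = β′ = M/(k(d−k+t)). Then for every sequence u_0, …, u_{g−1} of integers with 1 ≤ u_i ≤ t for all i and ∑_{i<g} u_i = k, writing S_i = ∑_{j<i} u_j, one has ∑_{i<g} u_i · min(α, (d − S_i)·β + (t − u_i)·β′) ≥ M. -/
/-!
At the MSCR point every term of the recovery sum is capped by the storage α: since
`S_i + u_i ≤ k`, the flow `(d - S_i) β + (t - u_i) β` is at least `(d - k + t) β = M / k = α`.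
Hence the sum is `(∑ u_i) α = k · M / k = M`.
-/

open Finset

theorem Finset.sum_range_add_le_sum_range (u : ℕ → ℕ) {i g : ℕ} (hi : i < g) :
    ∑ j ∈ range i, u j + u i ≤ ∑ j ∈ range g, u j := by
  rw [← sum_range_succ]
  exact sum_le_sum_of_subset (range_subset_range.2 hi)

theorem min_collect_coordinate_eq_storage {R : Type*} [CommRing R] [LinearOrder R]
    [IsStrictOrderedRing R] {α β d t k S v : R} (hβ : 0 ≤ β) (hSv : S + v ≤ k)
    (hα : α = (d - k + t) * β) :
    min α ((d - S) * β + (t - v) * β) = α := by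
  refine min_eq_left ?_
  calc α = (d - k + t) * β := hα
    _ ≤ (d - S + (t - v)) * β := mul_le_mul_of_nonneg_right (by linarith) hβ
    _ = (d - S) * β + (t - v) * β := add_mul _ _ _

theorem mscr_correctness_general (k d t g : ℕ) (hk : 0 < k) (ht : 0 < t)
    (hkd : k ≤ d) (M : ℝ) (hM : 0 < M)
    (α β β' : ℝ)
    (hα : α = M / k)
    (hβ : β = M / (k * ((d : ℝ) - k + t)))
    (hβ' : β' = M / (k * ((d : ℝ) - k + t)))
    (u : ℕ → ℕ)
    (hsum : ∑ i ∈ Finset.range g, u i = k) :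
    ∑ i ∈ Finset.range g, (u i : ℝ) *
        min α (((d : ℝ) - ((∑ j ∈ Finset.range i, u j : ℕ) : ℝ)) * β
          + ((t : ℝ) - (u i : ℝ)) * β') ≥ M := by
  have hD : (0 : ℝ) < d - k + t := by
    have : (k : ℝ) ≤ d := by exact_mod_cast hkd
    have : (0 : ℝ) < t := by exact_mod_cast ht
    linarith
  have hβ_nonneg : 0 ≤ β := hβ ▸ by positivity
  have hαβ : α = (d - k + t) * β := by
    rw [hα, hβ]
    field_simp
  have hmin : ∀ i ∈ range g, min α (((d : ℝ) - ((∑ j ∈ range i, u j : ℕ) : ℝ)) * β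
      + ((t : ℝ) - (u i : ℝ)) * β') = α := fun i hi => by
    have hSu : ∑ j ∈ range i, u j + u i ≤ k :=
      hsum ▸ sum_range_add_le_sum_range u (mem_range.1 hi)
    rw [hβ', ← hβ]
    exact min_collect_coordinate_eq_storage hβ_nonneg (by exact_mod_cast hSu) hαβ
  rw [sum_congr rfl fun i hi => by rw [hmin i hi], ← sum_mul, ← Nat.cast_sum, hsum, hα]
  exact (mul_div_cancel₀ M (by positivity)).ge

/-- MSCR correctness: Theorem 1 applied to the Minimum Storage point. -/
theorem mscr_correctness (k d t g : ℕ) (hk : 0 < k) (hd : 0 < d) (ht : 0 < t)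
    (hg : 0 < g) (hkd : k ≤ d) (M : ℝ) (hM : 0 < M)
    (α β β' : ℝ)
    (hα : α = M / k)
    (hβ : β = M / (k * ((d : ℝ) - k + t)))
    (hβ' : β' = M / (k * ((d : ℝ) - k + t)))
    (u : ℕ → ℕ) (hu : ∀ i < g, 1 ≤ u i ∧ u i ≤ t)
    (hsum : ∑ i ∈ Finset.range g, u i = k) :
    ∑ i ∈ Finset.range g, (u i : ℝ) *
        min α (((d : ℝ) - ((∑ j ∈ Finset.range i, u j : ℕ) : ℝ)) * β
          + ((t : ℝ) - (u i : ℝ)) * β') ≥ M :=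
  mscr_correctness_general k d t g hk ht hkd M hM α β β' hα hβ hβ' u hsum
end

section
/- Optimality of the MBCR repair cost: Let k, d, t be positive integers with k ≤ d, let M > 0 be real and let β, β′ ≥ 0 be reals satisfying the two cut constraints β·k(2d − k + t)/2 ≥ M and β·k(2d − k + 1)/2 + k(t − 1)·β′ ≥ M. Then the repair cost satisfies d·β + (t − 1)·β′ ≥ M(2d + t − 1)/(k(2d − k + t)). In particular the MBCR values β = 2M/(k(2d−k+t)), β′ = M/(k(2d−k+t)) achieve this bound with equality. -/
/-- Optimality of the MBCR repair cost. -/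
theorem mbcr_repair_cost_optimal (k d t : ℕ) (hk : 0 < k) (hd : 0 < d) (ht : 0 < t)
    (hkd : k ≤ d) (M : ℝ) (hM : 0 < M) :
    (∀ β β' : ℝ, 0 ≤ β → 0 ≤ β' →
      β * k * (2 * (d : ℝ) - k + t) / 2 ≥ M →
      β * k * (2 * (d : ℝ) - k + 1) / 2 + (k : ℝ) * ((t : ℝ) - 1) * β' ≥ M →
      (d : ℝ) * β + ((t : ℝ) - 1) * β'
        ≥ M * (2 * (d : ℝ) + t - 1) / (k * (2 * (d : ℝ) - k + t))) ∧
    ((d : ℝ) * (2 * M / (k * (2 * (d : ℝ) - k + t)))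
        + ((t : ℝ) - 1) * (M / (k * (2 * (d : ℝ) - k + t)))
      = M * (2 * (d : ℝ) + t - 1) / (k * (2 * (d : ℝ) - k + t))) := by
  have hk1 : (1 : ℝ) ≤ (k : ℝ) := by exact_mod_cast hk
  have hkd' : (k : ℝ) ≤ (d : ℝ) := by exact_mod_cast hkd
  have ht1 : (1 : ℝ) ≤ (t : ℝ) := by exact_mod_cast ht
  have hd1 : (1 : ℝ) ≤ (d : ℝ) := by exact_mod_cast hd
  have hD : (0 : ℝ) < 2 * (d : ℝ) - k + t := by linarith
  have hkD : (0 : ℝ) < (k : ℝ) * (2 * (d : ℝ) - k + t) := by positivity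
  constructor
  · intro β β' hβ hβ' h1 h2
    rw [ge_iff_le, div_le_iff₀ hkD]
    have h3 : ((k : ℝ) - 1) * (β * k * (2 * (d : ℝ) - k + t) / 2 - M) ≥ 0 :=
      mul_nonneg (by linarith) (by linarith)
    have h4 : (2 * (d : ℝ) - k + t) *
        (β * k * (2 * (d : ℝ) - k + 1) / 2 + (k : ℝ) * ((t : ℝ) - 1) * β' - M) ≥ 0 :=
      mul_nonneg (le_of_lt hD) (by linarith)
    nlinarith [h3, h4]
  · field_simp
    ring
end

section
/- Optimality of the MSCR repair cost: Let k, d, t be positive integers with k ≤ d, let M > 0 be real and let β, β′ ≥ 0 be reals satisfying (d − k + t)·β ≥ M/k and (d − k + 1)·β + (t − 1)·β′ ≥ M/k. Then the repair cost satisfies d·β + (t − 1)·β′ ≥ M(d + t − 1)/(k(d − k + t)). In particular the MSCR values β = β′ = M/(k(d−k+t)) achieve this bound with equality. -/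
/-- Optimality of the MSCR repair cost. -/
theorem mscr_repair_cost_optimal (k d t : ℕ) (hk : 0 < k) (hd : 0 < d) (ht : 0 < t)
    (hkd : k ≤ d) (M : ℝ) (hM : 0 < M) :
    (∀ β β' : ℝ, 0 ≤ β → 0 ≤ β' →
      ((d : ℝ) - k + t) * β ≥ M / k →
      ((d : ℝ) - k + 1) * β + ((t : ℝ) - 1) * β' ≥ M / k →
      (d : ℝ) * β + ((t : ℝ) - 1) * β'
        ≥ M * ((d : ℝ) + t - 1) / (k * ((d : ℝ) - k + t))) ∧
    ((d : ℝ) * (M / (k * ((d : ℝ) - k + t)))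
        + ((t : ℝ) - 1) * (M / (k * ((d : ℝ) - k + t)))
      = M * ((d : ℝ) + t - 1) / (k * ((d : ℝ) - k + t))) := by
  have hk' : (0:ℝ) < k := by exact_mod_cast hk
  have hkd' : (k:ℝ) ≤ d := by exact_mod_cast hkd
  have ht' : (1:ℝ) ≤ t := by exact_mod_cast ht
  have hs : (0:ℝ) < (d:ℝ) - k + t := by linarith
  have hks : (0:ℝ) < (k:ℝ) * ((d:ℝ) - k + t) := mul_pos hk' hs
  constructor
  · intro β β' hβ hβ' h1 h2
    rw [ge_iff_le, div_le_iff₀ hks]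
    rw [ge_iff_le, div_le_iff₀ hk'] at h1 h2
    have hk1 : (1:ℝ) ≤ k := by exact_mod_cast hk
    have hlam : (0:ℝ) ≤ (k:ℝ) - 1 := by linarith
    nlinarith [mul_le_mul_of_nonneg_left h1 hlam, mul_le_mul_of_nonneg_left h2 hs.le,
      mul_nonneg hβ hlam, mul_nonneg hβ' hlam]
  · field_simp
    ring
end

section
/- Optimal threshold for MBCR (first part of Theorem 2): Fix integers n and k with k ≥ 2. For all integers t₁, t₂ with 1 ≤ t₁ < t₂ ≤ n − k, the normalized MBCR repair cost strictly increases: (2n − t₁ − 1)/(2n − k − t₁) < (2n − t₂ − 1)/(2n − k − t₂) (as real numbers). Hence in a system of constant size n = d + t, the optimal repair group size for MBCR codes is t = 1. -/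
/-- Optimal threshold for MBCR (first part of Theorem 2):
the normalized MBCR repair cost strictly increases with t, so t = 1 is optimal. -/
theorem mbcr_cost_strict_mono (n k : ℤ) (hk : 2 ≤ k)
    (t₁ t₂ : ℤ) (ht₁ : 1 ≤ t₁) (h12 : t₁ < t₂) (ht₂ : t₂ ≤ n - k) :
    (2 * (n : ℝ) - t₁ - 1) / (2 * (n : ℝ) - k - t₁)
      < (2 * (n : ℝ) - t₂ - 1) / (2 * (n : ℝ) - k - t₂) := by
  have hn : (4 : ℝ) ≤ n := by
    have : 4 ≤ n := by omega
    exact_mod_cast this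
  have hk' : (2 : ℝ) ≤ k := by exact_mod_cast hk
  have ht1 : (1 : ℝ) ≤ t₁ := by exact_mod_cast ht₁
  have h12' : (t₁ : ℝ) < t₂ := by exact_mod_cast h12
  have ht2 : (t₂ : ℝ) ≤ n - k := by exact_mod_cast ht₂
  have hd2 : (0 : ℝ) < 2 * (n : ℝ) - k - t₂ := by linarith
  have hd1 : (0 : ℝ) < 2 * (n : ℝ) - k - t₁ := by linarith
  rw [div_lt_div_iff₀ hd1 hd2]
  nlinarith [mul_pos (sub_pos.mpr h12') (by linarith : (0:ℝ) < (k:ℝ) - 1)]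
end

section
/- Adaptive regenerating codes outperform MFR codes: For all integers n, k, t with k ≥ 1 and 1 ≤ t ≤ n − k, one has (n − 1)/(n − k) ≤ (n − t)/(n − t − k + 1) (as real numbers), with equality if and only if t = 1 or k = 1. Hence the average per-repair cost (M/k)(n−1)/(n−k) of adaptive regenerating codes never exceeds the MFR average per-repair cost (M/k)(n−t)/(n−t−k+1). -/
/-- Adaptive regenerating codes outperform MFR codes. -/
theorem arc_le_mfr (n k t : ℤ) (hk : 1 ≤ k) (ht : 1 ≤ t) (htn : t ≤ n - k) :
    ((n : ℝ) - 1) / ((n : ℝ) - k) ≤ ((n : ℝ) - t) / ((n : ℝ) - t - k + 1) ∧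
    (((n : ℝ) - 1) / ((n : ℝ) - k) = ((n : ℝ) - t) / ((n : ℝ) - t - k + 1)
      ↔ t = 1 ∨ k = 1) := by
  have hk' : (1 : ℝ) ≤ (k : ℝ) := by exact_mod_cast hk
  have ht' : (1 : ℝ) ≤ (t : ℝ) := by exact_mod_cast ht
  have htn' : (t : ℝ) ≤ (n : ℝ) - k := by exact_mod_cast htn
  have h1 : (0 : ℝ) < (n : ℝ) - k := by linarith
  have h2 : (0 : ℝ) < (n : ℝ) - t - k + 1 := by linarith
  constructor
  · rw [div_le_div_iff₀ h1 h2]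
    nlinarith [mul_nonneg (sub_nonneg.2 ht') (sub_nonneg.2 hk')]
  · rw [div_eq_div_iff h1.ne' h2.ne']
    constructor
    · intro h
      have : ((t : ℝ) - 1) * ((k : ℝ) - 1) = 0 := by nlinarith
      rcases mul_eq_zero.1 this with h' | h'
      · left; have : (t : ℝ) = 1 := by linarith
        exact_mod_cast this
      · right; have : (k : ℝ) = 1 := by linarith
        exact_mod_cast this
    · rintro (rfl | rfl) <;> push_cast <;> ring
end

section
/- MSCR repairs are cheaper than independent MSR repairs: For all integers k, d, t with k ≥ 1, t ≥ 1 and d ≥ k, one has (d + t − 1)/(d − k + t) ≤ d/(d − k + 1) (as real numbers), with equality if and only if t = 1 or k = 1. Hence the MSCR per-repair cost (M/k)(d+t−1)/(d−k+t) never exceeds the MSR per-repair cost (M/k)·d/(d−k+1). -/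
/-- MSCR repairs are cheaper than independent MSR repairs. -/
theorem mscr_le_msr (k d t : ℤ) (hk : 1 ≤ k) (ht : 1 ≤ t) (hd : k ≤ d) :
    ((d : ℝ) + t - 1) / ((d : ℝ) - k + t) ≤ (d : ℝ) / ((d : ℝ) - k + 1) ∧
    (((d : ℝ) + t - 1) / ((d : ℝ) - k + t) = (d : ℝ) / ((d : ℝ) - k + 1)
      ↔ t = 1 ∨ k = 1) := by
  have hkr : (1 : ℝ) ≤ (k : ℝ) := by exact_mod_cast hk
  have htr : (1 : ℝ) ≤ (t : ℝ) := by exact_mod_cast ht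
  have hdr : (k : ℝ) ≤ (d : ℝ) := by exact_mod_cast hd
  have h1 : (0 : ℝ) < (d : ℝ) - k + t := by linarith
  have h2 : (0 : ℝ) < (d : ℝ) - k + 1 := by linarith
  constructor
  · rw [div_le_div_iff₀ h1 h2]
    nlinarith [mul_nonneg (sub_nonneg.mpr htr) (sub_nonneg.mpr hkr)]
  · rw [div_eq_div_iff h1.ne' h2.ne']
    constructor
    · intro h
      have h3 : ((t : ℝ) - 1) * ((k : ℝ) - 1) = 0 := by nlinarith
      rcases mul_eq_zero.mp h3 with h4 | h4
      · left; have : (t : ℝ) = 1 := by linarith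
        exact_mod_cast this
      · right; have : (k : ℝ) = 1 := by linarith
        exact_mod_cast this
    · rintro (rfl | rfl) <;> push_cast <;> ring
end

section
/- MBCR repairs are cheaper than independent MBR repairs: For all integers k, d, t with k ≥ 1, t ≥ 1 and d ≥ k, one has (2d + t − 1)/(2d − k + t) ≤ 2d/(2d − k + 1) (as real numbers), with equality if and only if t = 1 or k = 1. Hence the MBCR per-repair cost (M/k)(2d+t−1)/(2d−k+t) never exceeds the MBR per-repair cost (M/k)·2d/(2d−k+1). -/
/-- MBCR repairs are cheaper than independent MBR repairs. -/
theorem mbcr_le_mbr (k d t : ℤ) (hk : 1 ≤ k) (ht : 1 ≤ t) (hd : k ≤ d) :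
    (2 * (d : ℝ) + t - 1) / (2 * (d : ℝ) - k + t)
        ≤ 2 * (d : ℝ) / (2 * (d : ℝ) - k + 1) ∧
    ((2 * (d : ℝ) + t - 1) / (2 * (d : ℝ) - k + t)
        = 2 * (d : ℝ) / (2 * (d : ℝ) - k + 1) ↔ t = 1 ∨ k = 1) := by
  have hk' : (1 : ℝ) ≤ (k : ℝ) := by exact_mod_cast hk
  have ht' : (1 : ℝ) ≤ (t : ℝ) := by exact_mod_cast ht
  have hd' : (k : ℝ) ≤ (d : ℝ) := by exact_mod_cast hd
  have h1 : (0 : ℝ) < 2 * (d : ℝ) - k + t := by linarith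
  have h2 : (0 : ℝ) < 2 * (d : ℝ) - k + 1 := by linarith
  constructor
  · rw [div_le_div_iff₀ h1 h2]
    nlinarith [mul_nonneg (by linarith : (0:ℝ) ≤ (k:ℝ) - 1) (by linarith : (0:ℝ) ≤ (t:ℝ) - 1)]
  · rw [div_eq_div_iff h1.ne' h2.ne']
    constructor
    · intro h
      have : ((k : ℝ) - 1) * ((t : ℝ) - 1) = 0 := by nlinarith
      rcases mul_eq_zero.mp this with h' | h'
      · right; have : (k : ℝ) = 1 := by linarith
        exact_mod_cast this
      · left; have : (t : ℝ) = 1 := by linarith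
        exact_mod_cast this
    · rintro (h | h) <;> subst h <;> push_cast <;> ring
end

section
/- MBCR outperforms delayed-repair erasure correcting codes: For all integers k, d, t with k ≥ 1, t ≥ 1 and d ≥ k, one has t·(2d + t − 1)/(2d − k + t) ≤ k + t − 1 (as real numbers). Hence the total MBCR cost t·(M/k)(2d+t−1)/(2d−k+t) of repairing t failures never exceeds the total cost M(k+t−1)/k of a delayed erasure-code repair of t failures. -/
/-- MBCR outperforms delayed-repair erasure correcting codes. -/
theorem mbcr_le_delayed_ecc (k d t : ℤ) (hk : 1 ≤ k) (ht : 1 ≤ t) (hd : k ≤ d) :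
    (t : ℝ) * (2 * (d : ℝ) + t - 1) / (2 * (d : ℝ) - k + t) ≤ (k : ℝ) + t - 1 := by
  have hk' : (1 : ℝ) ≤ (k : ℝ) := by exact_mod_cast hk
  have ht' : (1 : ℝ) ≤ (t : ℝ) := by exact_mod_cast ht
  have hd' : (k : ℝ) ≤ (d : ℝ) := by exact_mod_cast hd
  have hpos : (0 : ℝ) < 2 * (d : ℝ) - k + t := by linarith
  rw [div_le_iff₀ hpos]
  nlinarith [mul_nonneg (by linarith : (0:ℝ) ≤ (k:ℝ) - 1) (by linarith : (0:ℝ) ≤ 2*(d:ℝ) - k)]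
end

section
/- MSCR outperforms delayed-repair erasure correcting codes: For all integers k, d, t with k ≥ 1, t ≥ 1 and d ≥ k, one has t·(d + t − 1)/(d − k + t) ≤ k + t − 1 (as real numbers), with equality when d = k. Hence the total MSCR cost t·(M/k)(d+t−1)/(d−k+t) of repairing t failures never exceeds the total cost M(k+t−1)/k of a delayed erasure-code repair of t failures, and for d = k the two costs coincide. -/
/-!
Clearing the positive denominator `d - k + t`, the claim becomes
`t (d + t - 1) ≤ (k + t - 1)(d - k + t)`, and the gap between the two sides is exactly
`(k - 1)(d - k) ≥ 0`, which vanishes when `d = k`.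
-/

section LinearOrderedField

variable {𝕜 : Type*} [Field 𝕜]

theorem mscr_cost_gap (k d t : 𝕜) :
    (k + t - 1) * (d - k + t) - t * (d + t - 1) = (k - 1) * (d - k) := by
  ring

theorem mscr_ratio_self (k : 𝕜) {t : 𝕜} (ht : t ≠ 0) :
    t * (k + t - 1) / (k - k + t) = k + t - 1 := by
  rw [sub_self, zero_add, mul_div_cancel_left₀ _ ht]

variable [LinearOrder 𝕜] [IsStrictOrderedRing 𝕜]

theorem mscr_ratio_le {k d t : 𝕜} (hk : 1 ≤ k) (hd : k ≤ d) (ht : 0 < t) :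
    t * (d + t - 1) / (d - k + t) ≤ k + t - 1 := by
  rw [div_le_iff₀ (by linarith)]
  have hgap := mul_nonneg (sub_nonneg.2 hk) (sub_nonneg.2 hd)
  linarith [mscr_cost_gap k d t]

end LinearOrderedField

/-- MSCR outperforms delayed-repair erasure correcting codes, with equality when d = k. -/
theorem mscr_le_delayed_ecc (k d t : ℤ) (hk : 1 ≤ k) (ht : 1 ≤ t) (hd : k ≤ d) :
    (t : ℝ) * ((d : ℝ) + t - 1) / ((d : ℝ) - k + t) ≤ (k : ℝ) + t - 1 ∧
    (d = k → (t : ℝ) * ((d : ℝ) + t - 1) / ((d : ℝ) - k + t) = (k : ℝ) + t - 1) := by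
  have ht_pos : (0 : ℝ) < t := Int.cast_pos.2 ht
  refine ⟨mscr_ratio_le (by exact_mod_cast hk) (by exact_mod_cast hd) ht_pos, ?_⟩
  rintro rfl
  exact mscr_ratio_self _ ht_pos.ne'
end
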